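/- For every integer n ≥ 1, the map sending a snake σ∈S_n^0 to the pair (|σ|, (cs(σ,1),…,cs(σ,n))) is injective on S_n^0; moreover, for every σ∈S_n^0 one has cs(σ) = ∑_{j=1}^{n} cs(σ,j). The same two assertions hold with S_n^0 replaced by S_n^{00} (with the corresponding boundary convention). -/

import Mathlib

open Finset Polynomial

/-- A signed permutation of `[n]` in window notation: the underlying permutation
`σ.1` of absolute values (0-indexed) together with the signs `σ.2` of the entries. -/
abbrev SP (n : ℕ) := Equiv.Perm (Fin n) × (Fin n → Bool)

/-- The window entry `σ_{i+1}` of a signed permutation, as an integer. -/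
def entry {n : ℕ} (σ : SP n) (i : Fin n) : ℤ :=
  (if σ.2 i then -1 else 1) * (((σ.1 i : ℕ) : ℤ) + 1)

/-- `neg σ`: the number of negative entries in the window notation. -/
def negc {n : ℕ} (σ : SP n) : ℕ := (Finset.univ.filter fun i => σ.2 i = true).card

/-- `wex σ`: the number of weak excedances `σ_i ≥ i`. -/
def wexc {n : ℕ} (σ : SP n) : ℕ :=
  (Finset.univ.filter fun i : Fin n => ((i : ℕ) : ℤ) + 1 ≤ entry σ i).card

/-- `fwex σ = 2 wex σ + neg σ`. -/
def fwex {n : ℕ} (σ : SP n) : ℕ := 2 * wexc σ + negc σ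

/-- `cro_B σ`: the number of crossings of the signed permutation `σ`, i.e. pairs
`(i,j)` of (1-indexed) positions with `i<j≤σ_i<σ_j`, or `-i<j≤-σ_i<σ_j`, or
`i>j>σ_i>σ_j`. -/
def croB {n : ℕ} (σ : SP n) : ℕ :=
  (Finset.univ.filter fun p : Fin n × Fin n =>
    ((((p.1 : ℕ) : ℤ) + 1 < ((p.2 : ℕ) : ℤ) + 1) ∧ (((p.2 : ℕ) : ℤ) + 1 ≤ entry σ p.1) ∧
        entry σ p.1 < entry σ p.2) ∨
    ((-(((p.1 : ℕ) : ℤ) + 1) < ((p.2 : ℕ) : ℤ) + 1) ∧ (((p.2 : ℕ) : ℤ) + 1 ≤ -entry σ p.1) ∧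
        -entry σ p.1 < entry σ p.2) ∨
    ((((p.2 : ℕ) : ℤ) + 1 < ((p.1 : ℕ) : ℤ) + 1) ∧ (entry σ p.1 < ((p.2 : ℕ) : ℤ) + 1) ∧
        entry σ p.2 < entry σ p.1)).card

/-- A signed permutation `σ ∈ B_n` is a snake: `σ_1 > σ_2 < σ_3 > ⋯`. -/
abbrev IsSnake {n : ℕ} (σ : SP n) : Prop :=
  ∀ i j : Fin n, (j : ℕ) = (i : ℕ) + 1 →
    (Even (i : ℕ) → entry σ j < entry σ i) ∧ (¬ Even (i : ℕ) → entry σ i < entry σ j)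

/-- `σ ∈ S_n^0`: a snake with `σ_1 > 0`. -/
abbrev IsSnake0 {n : ℕ} (σ : SP n) : Prop :=
  IsSnake σ ∧ ∀ h : 0 < n, 0 < entry σ ⟨0, h⟩

/-- `σ ∈ S_n^00`: a snake with `σ_1 > 0` and `(-1)^n σ_n < 0`. -/
abbrev IsSnake00 {n : ℕ} (σ : SP n) : Prop :=
  IsSnake0 σ ∧ ∀ h : 0 < n, (-1 : ℤ) ^ n * entry σ ⟨n - 1, by omega⟩ < 0

/-- The extended signed word of `σ ∈ S_n^0`: positions `0,…,n+1` carry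
`0, σ_1, …, σ_n, (-1)^n (n+1)`. -/
def word0 {n : ℕ} (σ : SP n) (k : ℕ) : ℤ :=
  if h : 1 ≤ k ∧ k ≤ n then entry σ ⟨k - 1, by omega⟩
  else if k = n + 1 then (-1 : ℤ) ^ n * ((n : ℤ) + 1)
  else 0

/-- The extended signed word of `σ ∈ S_n^00`: positions `0,…,n+1` carry
`0, σ_1, …, σ_n, 0`. -/
def word00 {n : ℕ} (σ : SP n) (k : ℕ) : ℤ :=
  if h : 1 ≤ k ∧ k ≤ n then entry σ ⟨k - 1, by omega⟩ else 0

/-- `cs`: the number of sign changes along an extended word of length `n+2`,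
i.e. the number of `i` with `0 ≤ i ≤ n` and `w_i w_{i+1} < 0`. -/
def csWord (w : ℕ → ℤ) (n : ℕ) : ℕ :=
  ((Finset.range (n + 1)).filter fun i => w i * w (i + 1) < 0).card

/-- `13-2(a, i)`: the number of `j` with `0 ≤ j < i-1` and `a j < a i < a (j+1)`. -/
def ots (a : ℕ → ℕ) (i : ℕ) : ℕ :=
  ((Finset.range (i - 1)).filter fun j => a j < a i ∧ a i < a (j + 1)).card

/-- `2-31(a, i)` (interior positions `1,…,n`): the number of `j` with `i < j ≤ n`
and `a j > a i > a (j+1)`. -/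
def tto (a : ℕ → ℕ) (n i : ℕ) : ℕ :=
  ((Finset.Icc (i + 1) n).filter fun j => a i < a j ∧ a (j + 1) < a i).card

/-- `2-31(a) = ∑_{i=1}^n 2-31(a, i)`. -/
def ttoTot (a : ℕ → ℕ) (n : ℕ) : ℕ := ∑ i ∈ Finset.Icc 1 n, tto a n i

/-- Position `i` is a valley with sign changes on both sides. -/
abbrev Xcond (w : ℕ → ℤ) (i : ℕ) : Prop :=
  (w i).natAbs < (w (i - 1)).natAbs ∧ (w i).natAbs < (w (i + 1)).natAbs ∧
    w (i - 1) * w i < 0 ∧ w i * w (i + 1) < 0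

/-- Position `i` is a double ascent or a double descent. -/
abbrev Ycond (w : ℕ → ℤ) (i : ℕ) : Prop :=
  ((w (i - 1)).natAbs < (w i).natAbs ∧ (w i).natAbs < (w (i + 1)).natAbs) ∨
    ((w (i + 1)).natAbs < (w i).natAbs ∧ (w i).natAbs < (w (i - 1)).natAbs)

/-- Position `i` is a peak. -/
abbrev Zcond (w : ℕ → ℤ) (i : ℕ) : Prop :=
  (w (i - 1)).natAbs < (w i).natAbs ∧ (w (i + 1)).natAbs < (w i).natAbs

/-- The number of sign changes `cs(σ, j)` recorded at an interior position `i` of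
an extended signed word `w`: `0` at a valley without adjacent sign changes, `2`
at a valley with sign changes on both sides, `0` at a peak and `1` otherwise. -/
def csAt (w : ℕ → ℤ) (i : ℕ) : ℕ :=
  if (w i).natAbs < (w (i - 1)).natAbs ∧ (w i).natAbs < (w (i + 1)).natAbs then
    (if w (i - 1) * w i < 0 ∧ w i * w (i + 1) < 0 then 2 else 0)
  else if (w (i - 1)).natAbs < (w i).natAbs ∧ (w (i + 1)).natAbs < (w i).natAbs then 0
  else 1

/-- `cs(σ, j)` for the value `j+1` of a snake `σ ∈ S_n^0`: the value recorded at
the position of `j+1` in the extended word. -/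
def csVal0 {n : ℕ} (σ : SP n) (j : Fin n) : ℕ :=
  csAt (word0 σ) ((σ.1.symm j : ℕ) + 1)

/-- `cs(σ, j)` for the value `j+1` of a snake `σ ∈ S_n^00`. -/
def csVal00 {n : ℕ} (σ : SP n) (j : Fin n) : ℕ :=
  csAt (word00 σ) ((σ.1.symm j : ℕ) + 1)

/-!
In the extended word `w = 0, σ_1, …, σ_n, w_{n+1}` of a snake every interior position is a
strict local extremum of `w` (a maximum at odd positions, a minimum at even ones), and adjacent
letters have distinct absolute values. Charge each sign change `w_k w_{k+1} < 0` to the endpoint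
of smaller absolute value. At a peak of `|w|` nothing is charged; at a valley of `|w|` the
extremum forces sign changes on both sides or on neither; at a double ascent or descent it
forces a sign change on the side where `|w|` increases, and only that one is charged. So
`cs(σ, j)` counts the sign changes charged to the position of `j`, and none is charged to the
boundary (`w_0 = 0`, and a change at the last edge goes to position `n`): this is
`cs(σ) = ∑ cs(σ, j)`.

Injectivity is local: at a local maximum, `w_i < 0` exactly when `i` is a valley of `|w|` with
`cs = 0` (and dually at a local minimum), so `|σ|` and the `cs`-vector determine every sign.
-/

def Alternating (w : ℕ → ℤ) (n : ℕ) : Prop :=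
  ∀ k ≤ n, if Even k then w k < w (k + 1) else w (k + 1) < w k

def IsStrictLocalMaxAt (w : ℕ → ℤ) (i : ℕ) : Prop :=
  w (i - 1) < w i ∧ w (i + 1) < w i

def risingSignChange (w : ℕ → ℤ) (k : ℕ) : ℕ :=
  if w k * w (k + 1) < 0 ∧ (w k).natAbs < (w (k + 1)).natAbs then 1 else 0

def fallingSignChange (w : ℕ → ℤ) (k : ℕ) : ℕ :=
  if w k * w (k + 1) < 0 ∧ (w (k + 1)).natAbs < (w k).natAbs then 1 else 0

section Word

variable {w w' : ℕ → ℤ} {n i : ℕ}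

@[simp]
lemma csAt_neg (w : ℕ → ℤ) (i : ℕ) : csAt (-w) i = csAt w i := by
  simp only [csAt, Pi.neg_apply, Int.natAbs_neg, neg_mul_neg]

@[simp]
lemma risingSignChange_neg (w : ℕ → ℤ) (k : ℕ) :
    risingSignChange (-w) k = risingSignChange w k := by
  simp only [risingSignChange, Pi.neg_apply, Int.natAbs_neg, neg_mul_neg]

@[simp]
lemma fallingSignChange_neg (w : ℕ → ℤ) (k : ℕ) :
    fallingSignChange (-w) k = fallingSignChange w k := by
  simp only [fallingSignChange, Pi.neg_apply, Int.natAbs_neg, neg_mul_neg]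

lemma csAt_succ_eq_of_isStrictLocalMaxAt (hmax : IsStrictLocalMaxAt w (i + 1))
    (hl : (w i).natAbs ≠ (w (i + 1)).natAbs) (hr : (w (i + 1)).natAbs ≠ (w (i + 2)).natAbs) :
    csAt w (i + 1) = fallingSignChange w i + risingSignChange w (i + 1) := by
  simp only [IsStrictLocalMaxAt, Nat.add_sub_cancel, add_assoc, Nat.reduceAdd] at hmax
  simp only [csAt, fallingSignChange, risingSignChange, mul_neg_iff, Nat.add_sub_cancel,
    add_assoc, Nat.reduceAdd]
  split_ifs <;> omega

lemma csAt_succ_eq (hmax : IsStrictLocalMaxAt w (i + 1) ∨ IsStrictLocalMaxAt (-w) (i + 1))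
    (hl : (w i).natAbs ≠ (w (i + 1)).natAbs) (hr : (w (i + 1)).natAbs ≠ (w (i + 2)).natAbs) :
    csAt w (i + 1) = fallingSignChange w i + risingSignChange w (i + 1) := by
  rcases hmax with hmax | hmax
  · exact csAt_succ_eq_of_isStrictLocalMaxAt hmax hl hr
  · simpa using csAt_succ_eq_of_isStrictLocalMaxAt hmax (by simpa using hl) (by simpa using hr)

lemma neg_iff_of_isStrictLocalMaxAt (hmax : IsStrictLocalMaxAt w i) (h0 : w i ≠ 0) :
    w i < 0 ↔ (w i).natAbs < (w (i - 1)).natAbs ∧ (w i).natAbs < (w (i + 1)).natAbs ∧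
      csAt w i = 0 := by
  unfold IsStrictLocalMaxAt at hmax
  simp only [csAt, mul_neg_iff]
  split_ifs <;> constructor <;> intro h <;> (try simp only [and_false, and_true] at h ⊢) <;> omega

lemma eq_of_isStrictLocalMaxAt (hmax : IsStrictLocalMaxAt w i) (hmax' : IsStrictLocalMaxAt w' i)
    (h0 : w i ≠ 0)
    (hl : (w (i - 1)).natAbs = (w' (i - 1)).natAbs) (hm : (w i).natAbs = (w' i).natAbs)
    (hr : (w (i + 1)).natAbs = (w' (i + 1)).natAbs) (hcs : csAt w i = csAt w' i) :
    w i = w' i := by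
  have hsign := neg_iff_of_isStrictLocalMaxAt hmax h0
  rw [hl, hm, hr, hcs, ← neg_iff_of_isStrictLocalMaxAt hmax' (by omega)] at hsign
  omega

namespace Alternating

lemma isStrictLocalMaxAt_of_even (h : Alternating w n) (hi : i < n) (he : Even i) :
    IsStrictLocalMaxAt w (i + 1) := by
  have h1 := h i hi.le
  have h2 := h (i + 1) hi
  rw [if_pos he] at h1
  rw [if_neg (Nat.not_even_iff_odd.2 he.add_one)] at h2
  exact ⟨by simpa using h1, h2⟩

lemma isStrictLocalMaxAt_neg_of_odd (h : Alternating w n) (hi : i < n) (ho : Odd i) :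
    IsStrictLocalMaxAt (-w) (i + 1) := by
  have h1 := h i hi.le
  have h2 := h (i + 1) hi
  rw [if_neg (Nat.not_even_iff_odd.2 ho)] at h1
  rw [if_pos ho.add_one] at h2
  simp only [IsStrictLocalMaxAt, Pi.neg_apply, Nat.add_sub_cancel, neg_lt_neg_iff]
  exact ⟨h1, h2⟩

lemma isStrictLocalMaxAt_or (h : Alternating w n) (hi : i < n) :
    IsStrictLocalMaxAt w (i + 1) ∨ IsStrictLocalMaxAt (-w) (i + 1) :=
  (Nat.even_or_odd i).imp (h.isStrictLocalMaxAt_of_even hi) (h.isStrictLocalMaxAt_neg_of_odd hi)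

theorem csWord_eq_sum_csAt (h : Alternating w n)
    (hne : ∀ k ≤ n, (w k).natAbs ≠ (w (k + 1)).natAbs) (h0 : w 0 = 0)
    (hlast : w n * w (n + 1) < 0 → (w n).natAbs < (w (n + 1)).natAbs) :
    csWord w n = ∑ i ∈ range n, csAt w (i + 1) := by
  have hsplit : ∀ k ∈ range (n + 1), (if w k * w (k + 1) < 0 then 1 else 0) =
      risingSignChange w k + fallingSignChange w k := by
    intro k hk
    have := hne k (Nat.lt_succ_iff.1 (mem_range.1 hk))
    unfold risingSignChange fallingSignChange
    split_ifs <;> omega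
  have hfirst : risingSignChange w 0 = 0 := by simp [risingSignChange, h0]
  have hfinal : fallingSignChange w n = 0 := by
    unfold fallingSignChange
    split_ifs with hc
    · exact absurd (hlast hc.1) (by omega)
    · rfl
  calc csWord w n = ∑ k ∈ range (n + 1), (risingSignChange w k + fallingSignChange w k) := by
        rw [csWord, card_filter, sum_congr rfl hsplit]
    _ = ∑ i ∈ range n, (fallingSignChange w i + risingSignChange w (i + 1)) := by
        rw [sum_add_distrib, sum_range_succ', sum_range_succ (fallingSignChange w), hfirst,
          hfinal, sum_add_distrib]
        ring
    _ = ∑ i ∈ range n, csAt w (i + 1) := by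
        refine sum_congr rfl fun i hi => ?_
        have hi := mem_range.1 hi
        exact (csAt_succ_eq (h.isStrictLocalMaxAt_or hi) (hne i hi.le) (hne (i + 1) hi)).symm

theorem eq_of_csAt_eq (h : Alternating w n) (h' : Alternating w' n)
    (habs : ∀ k ≤ n + 1, (w k).natAbs = (w' k).natAbs)
    (hcs : ∀ i < n, csAt w (i + 1) = csAt w' (i + 1)) (hne : ∀ i < n, w (i + 1) ≠ 0)
    (hi : i < n) : w (i + 1) = w' (i + 1) := by
  have hl : (w (i + 1 - 1)).natAbs = (w' (i + 1 - 1)).natAbs := habs i (by omega)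
  have hm := habs (i + 1) (by omega)
  have hr := habs (i + 2) (by omega)
  rcases Nat.even_or_odd i with he | ho
  · exact eq_of_isStrictLocalMaxAt (h.isStrictLocalMaxAt_of_even hi he)
      (h'.isStrictLocalMaxAt_of_even hi he) (hne i hi) hl hm hr (hcs i hi)
  · have := eq_of_isStrictLocalMaxAt (h.isStrictLocalMaxAt_neg_of_odd hi ho)
      (h'.isStrictLocalMaxAt_neg_of_odd hi ho) (neg_ne_zero.2 (hne i hi))
      (by simpa using hl) (by simpa using hm) (by simpa using hr) (by simpa using hcs i hi)
    simpa using this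

end Alternating

end Word

section Snake

variable {n : ℕ}

lemma natAbs_entry (σ : SP n) (i : Fin n) : (entry σ i).natAbs = σ.1 i + 1 := by
  unfold entry
  split_ifs <;> simp only [neg_one_mul, one_mul, Int.natAbs_neg] <;> omega

lemma entry_neg_iff (σ : SP n) (i : Fin n) : entry σ i < 0 ↔ σ.2 i = true := by
  unfold entry
  cases σ.2 i <;> simp only [Bool.false_eq_true, if_false, if_true, one_mul, neg_one_mul,
    neg_neg_iff_pos, iff_true, iff_false, not_lt] <;> omega

lemma entry_injective : Function.Injective (entry (n := n)) := by
  intro σ τ h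
  refine Prod.ext (Equiv.ext fun i => Fin.ext ?_) (funext fun i => ?_)
  · have := natAbs_entry σ i
    rw [congrFun h i, natAbs_entry] at this
    omega
  · have := entry_neg_iff σ i
    rw [congrFun h i, entry_neg_iff] at this
    exact Bool.eq_iff_iff.2 this.symm

/-- The common shape of `word0 σ` and `word00 σ`, which differ only in the letter at `n + 1`. -/
structure IsExtendedWord (σ : SP n) (w : ℕ → ℤ) : Prop where
  zero : w 0 = 0
  succ : ∀ i (hi : i < n), w (i + 1) = entry σ ⟨i, hi⟩

namespace IsExtendedWord

variable {σ τ : SP n} {w w' : ℕ → ℤ}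

lemma natAbs_succ (hw : IsExtendedWord σ w) {i : ℕ} (hi : i < n) :
    (w (i + 1)).natAbs = σ.1 ⟨i, hi⟩ + 1 := by
  rw [hw.succ i hi, natAbs_entry]

lemma natAbs_le (hw : IsExtendedWord σ w) {k : ℕ} (hk : k ≤ n) : (w k).natAbs ≤ n := by
  rcases k with _ | i
  · simp [hw.zero]
  · have := (σ.1 ⟨i, hk⟩).isLt
    rw [hw.natAbs_succ hk]
    omega

lemma alternating (hw : IsExtendedWord σ w) (hσ : IsSnake0 σ)
    (hlast : if Even n then w n < w (n + 1) else w (n + 1) < w n) : Alternating w n := by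
  intro k hk
  rcases hk.lt_or_eq with hk | rfl
  · rcases k with _ | i
    · simpa [hw.zero, hw.succ 0 hk] using hσ.2 hk
    · have hsnake := hσ.1 ⟨i, by omega⟩ ⟨i + 1, hk⟩ rfl
      rw [hw.succ i (by omega), hw.succ (i + 1) hk]
      rcases Nat.even_or_odd i with he | ho
      · rw [if_neg (Nat.not_even_iff_odd.2 he.add_one)]
        exact hsnake.1 he
      · rw [if_pos ho.add_one]
        exact hsnake.2 (Nat.not_even_iff_odd.2 ho)
  · exact hlast

lemma natAbs_ne_succ (hw : IsExtendedWord σ w) (hlast : (w n).natAbs ≠ (w (n + 1)).natAbs) :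
    ∀ k ≤ n, (w k).natAbs ≠ (w (k + 1)).natAbs := by
  intro k hk
  rcases hk.lt_or_eq with hk | rfl
  · rw [hw.natAbs_succ hk]
    rcases k with _ | i
    · simp [hw.zero]
    · rw [hw.natAbs_succ (Nat.lt_of_succ_lt hk)]
      intro heq
      have := σ.1.injective (Fin.ext (Nat.succ_inj.1 heq))
      simp at this
  · exact hlast

theorem csWord_eq (hw : IsExtendedWord σ w) (halt : Alternating w n)
    (hne : (w n).natAbs ≠ (w (n + 1)).natAbs)
    (hlast : w n * w (n + 1) < 0 → (w n).natAbs < (w (n + 1)).natAbs) :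
    csWord w n = ∑ j : Fin n, csAt w (σ.1.symm j + 1) := by
  rw [halt.csWord_eq_sum_csAt (hw.natAbs_ne_succ hne) hw.zero hlast,
    Equiv.sum_comp σ.1.symm (fun i : Fin n => csAt w (i + 1)),
    Fin.sum_univ_eq_sum_range (fun i => csAt w (i + 1))]

theorem eq_of_csAt_eq (hw : IsExtendedWord σ w) (hw' : IsExtendedWord τ w')
    (halt : Alternating w n) (halt' : Alternating w' n) (hperm : σ.1 = τ.1)
    (hlast : (w (n + 1)).natAbs = (w' (n + 1)).natAbs)
    (hcs : ∀ j, csAt w (σ.1.symm j + 1) = csAt w' (τ.1.symm j + 1)) : σ = τ := by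
  have habs : ∀ k ≤ n + 1, (w k).natAbs = (w' k).natAbs := by
    intro k hk
    rcases hk.lt_or_eq with hk | rfl
    · rcases k with _ | i
      · simp [hw.zero, hw'.zero]
      · rw [hw.natAbs_succ (by omega), hw'.natAbs_succ (by omega), hperm]
    · exact hlast
  have hcs' : ∀ i < n, csAt w (i + 1) = csAt w' (i + 1) := fun i hi => by
    simpa [hperm] using hcs (σ.1 ⟨i, hi⟩)
  have hne : ∀ i < n, w (i + 1) ≠ 0 := fun i hi h => by
    simpa [h] using hw.natAbs_succ hi
  refine entry_injective (funext fun i => ?_)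
  have := halt.eq_of_csAt_eq halt' habs hcs' hne i.isLt
  rwa [hw.succ i i.isLt, hw'.succ i i.isLt] at this

end IsExtendedWord

lemma isExtendedWord_word0 (σ : SP n) : IsExtendedWord σ (word0 σ) :=
  ⟨by simp [word0], fun i hi => by simp [word0, hi]⟩

lemma word0_last (σ : SP n) : word0 σ (n + 1) = (-1) ^ n * (n + 1) := by
  simp [word0]

lemma natAbs_word0_lt_last (σ : SP n) : (word0 σ n).natAbs < (word0 σ (n + 1)).natAbs := by
  have := (isExtendedWord_word0 σ).natAbs_le le_rfl
  rw [word0_last, Int.natAbs_mul, Int.natAbs_pow]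
  simp only [Int.reduceNeg, Int.natAbs_neg, Int.natAbs_one, one_pow, one_mul]
  omega

lemma alternating_word0 {σ : SP n} (hσ : IsSnake0 σ) : Alternating (word0 σ) n := by
  refine (isExtendedWord_word0 σ).alternating hσ ?_
  have := (isExtendedWord_word0 σ).natAbs_le le_rfl
  rw [word0_last]
  split_ifs with he
  · rw [he.neg_one_pow]
    omega
  · rw [(Nat.not_even_iff_odd.1 he).neg_one_pow]
    omega

theorem csWord_word0 {σ : SP n} (hσ : IsSnake0 σ) :
    csWord (word0 σ) n = ∑ j : Fin n, csVal0 σ j :=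
  (isExtendedWord_word0 σ).csWord_eq (alternating_word0 hσ) (natAbs_word0_lt_last σ).ne
    fun _ => natAbs_word0_lt_last σ

theorem eq_of_csVal0_eq {σ τ : SP n} (hσ : IsSnake0 σ) (hτ : IsSnake0 τ) (hperm : σ.1 = τ.1)
    (hcs : ∀ j, csVal0 σ j = csVal0 τ j) : σ = τ :=
  (isExtendedWord_word0 σ).eq_of_csAt_eq (isExtendedWord_word0 τ) (alternating_word0 hσ)
    (alternating_word0 hτ) hperm (by simp [word0_last]) hcs

lemma isExtendedWord_word00 (σ : SP n) : IsExtendedWord σ (word00 σ) :=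
  ⟨by simp [word00], fun i hi => by simp [word00, hi]⟩

lemma word00_last (σ : SP n) : word00 σ (n + 1) = 0 := by
  simp [word00]

lemma alternating_word00 (hn : 1 ≤ n) {σ : SP n} (hσ : IsSnake00 σ) :
    Alternating (word00 σ) n := by
  refine (isExtendedWord_word00 σ).alternating hσ.1 ?_
  obtain ⟨m, rfl⟩ : ∃ m, n = m + 1 := ⟨n - 1, by omega⟩
  have hsign := hσ.2 hn
  rw [word00_last, (isExtendedWord_word00 σ).succ m (by omega)]
  split_ifs with he
  · rwa [he.neg_one_pow, one_mul] at hsign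
  · rw [(Nat.not_even_iff_odd.1 he).neg_one_pow, neg_one_mul] at hsign
    simpa using hsign

lemma natAbs_word00_ne_last (hn : 1 ≤ n) (σ : SP n) :
    (word00 σ n).natAbs ≠ (word00 σ (n + 1)).natAbs := by
  obtain ⟨m, rfl⟩ : ∃ m, n = m + 1 := ⟨n - 1, by omega⟩
  rw [(isExtendedWord_word00 σ).natAbs_succ (by omega), word00_last]
  omega

theorem csWord_word00 (hn : 1 ≤ n) {σ : SP n} (hσ : IsSnake00 σ) :
    csWord (word00 σ) n = ∑ j : Fin n, csVal00 σ j :=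
  (isExtendedWord_word00 σ).csWord_eq (alternating_word00 hn hσ) (natAbs_word00_ne_last hn σ)
    fun h => by simp [word00_last] at h

theorem eq_of_csVal00_eq (hn : 1 ≤ n) {σ τ : SP n} (hσ : IsSnake00 σ) (hτ : IsSnake00 τ)
    (hperm : σ.1 = τ.1) (hcs : ∀ j, csVal00 σ j = csVal00 τ j) : σ = τ :=
  (isExtendedWord_word00 σ).eq_of_csAt_eq (isExtendedWord_word00 τ) (alternating_word00 hn hσ)
    (alternating_word00 hn hτ) hperm (by simp [word00_last]) hcs

end Snake

/-- Lemma 5.1: for `n ≥ 1`, each snake of `S_n^0` (resp. of `S_n^00`) is uniquely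
determined by `|σ|` and its `cs`-vector `(cs(σ,1),…,cs(σ,n))`, and
`cs(σ) = ∑_{j=1}^n cs(σ,j)`. -/
theorem statement18 (n : ℕ) (hn : 1 ≤ n) :
    (∀ σ τ : SP n, IsSnake0 σ → IsSnake0 τ → σ.1 = τ.1 →
      (∀ j : Fin n, csVal0 σ j = csVal0 τ j) → σ = τ) ∧
    (∀ σ : SP n, IsSnake0 σ → csWord (word0 σ) n = ∑ j : Fin n, csVal0 σ j) ∧
    (∀ σ τ : SP n, IsSnake00 σ → IsSnake00 τ → σ.1 = τ.1 →
      (∀ j : Fin n, csVal00 σ j = csVal00 τ j) → σ = τ) ∧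
    (∀ σ : SP n, IsSnake00 σ → csWord (word00 σ) n = ∑ j : Fin n, csVal00 σ j) :=
  ⟨fun _ _ => eq_of_csVal0_eq, fun _ => csWord_word0, fun _ _ => eq_of_csVal00_eq hn,
    fun _ => csWord_word00 hn⟩
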